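/- In a non-singlet family S=(a_1,...,a_k,b_l,...,b_1), the positions that are NOT exit positions are exactly: the highest blue b_l, and, in the case k=1, the unique red a_1. Consequently a family with exactly two elements has no exit positions, while a family with at least three elements remains a family after removal of any exit element. -/

import Mathlib

/-- A (non-singlet) sequence family: a list `(a₁,…,a_k,b_l,…,b₁)` of integers with
`k, l ≥ 1` and `b₁ < … < b_l < a₁ < … < a_k`; the `aᵢ` (the increasing prefix) are the
reds (ascent values) and the `bⱼ` (the decreasing suffix) are the blues (descent values). -/
def IsFamilySeq (l : List ℤ) : Prop :=
  ∃ a d : List ℤ, l = a ++ d ∧ a ≠ [] ∧ d ≠ [] ∧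
    a.Chain' (· < ·) ∧ d.Chain' (· > ·) ∧ ∀ u ∈ d, ∀ v ∈ a, u < v

/-- Insert `m` immediately before (the unique occurrence of) `x` in `l`. -/
def insertBefore (l : List ℤ) (x m : ℤ) : List ℤ :=
  l.takeWhile (· != x) ++ m :: l.dropWhile (· != x)

/-- `x` is in an exit position of the family `l`: inserting any `m` larger than all
elements of `l` immediately before `x` does not yield a family. -/
def ExitPos (l : List ℤ) (x : ℤ) : Prop :=
  x ∈ l ∧ ∀ m : ℤ, (∀ y ∈ l, y < m) → ¬ IsFamilySeq (insertBefore l x m)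

/-- `l'` is the regular insertion of `x` into the family `l = a ++ d` (reds `a`, blues `d`,
highest blue `b_l = max d`): if `x > b_l` then `x` is inserted, colored red, at its order
position among the reds, and if `x < b_l` then `x` is inserted, colored blue, at its order
position among the blues. -/
def RegInsert (l : List ℤ) (x : ℤ) (l' : List ℤ) : Prop :=
  ∃ a d : List ℤ, l = a ++ d ∧ a ≠ [] ∧ d ≠ [] ∧
    a.Chain' (· < ·) ∧ d.Chain' (· > ·) ∧ (∀ u ∈ d, ∀ v ∈ a, u < v) ∧
    (((∀ u ∈ d, u < x) ∧ l' = List.orderedInsert (· ≤ ·) x a ++ d) ∨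
     ((∃ u ∈ d, x < u) ∧ l' = a ++ List.orderedInsert (fun p q => q ≤ p) x d))

/-! A maximal new entry `m` can only be the last red, so inserting it before `x` in
`s ++ x :: t` gives a family exactly when `s`, `x :: t` is itself a red/blue split, with `s`
possibly empty. A family determines its reds, so this happens only for `s = a` (then `x` is
the highest blue) or `s = []` (then `x :: t = a ++ d` decreases, forcing `a = [x]`). Every
other position lies strictly inside the reds or the blues, so erasing it leaves both nonempty. -/

theorem List.exists_forall_lt {α : Type*} [LinearOrder α] [Nonempty α] [NoMaxOrder α]
    (l : List α) : ∃ m, ∀ y ∈ l, y < m := by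
  obtain ⟨M, hM⟩ := l.finite_toSet.bddAbove
  obtain ⟨m, hm⟩ := exists_gt M
  exact ⟨m, fun y hy => (hM hy).trans_lt hm⟩

theorem List.eq_nil_of_pairwise_append_of_forall_lt {α : Type*} [Preorder α] {a b : List α}
    (ha : a ≠ []) (hab : (a ++ b).Pairwise (· < ·)) (hba : ∀ u ∈ b, ∀ v ∈ a, u < v) :
    b = [] := by
  obtain ⟨v, hv⟩ := List.exists_mem_of_ne_nil a ha
  refine List.eq_nil_iff_forall_not_mem.2 fun u hu => ?_
  exact (hba u hu v hv).not_gt (List.pairwise_append.1 hab |>.2.2 v hv u hu)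

/-- The red/blue conditions of a family `a ++ d`, without `a ≠ []` and `d ≠ []`: `a = []`
occurs when a new maximum is inserted before the first entry. -/
def IsFamilySplit (a d : List ℤ) : Prop :=
  a.Pairwise (· < ·) ∧ d.Pairwise (· > ·) ∧ ∀ u ∈ d, ∀ v ∈ a, u < v

theorem isFamilySeq_iff {l : List ℤ} :
    IsFamilySeq l ↔ ∃ a d, l = a ++ d ∧ a ≠ [] ∧ d ≠ [] ∧ IsFamilySplit a d := by
  simp only [IsFamilySeq, IsFamilySplit, ← List.isChain_iff_pairwise]
  exact Iff.rfl

theorem IsFamilySplit.sublist {a d a' d' : List ℤ} (h : IsFamilySplit a d)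
    (ha : a'.Sublist a) (hd : d'.Sublist d) : IsFamilySplit a' d' :=
  ⟨h.1.sublist ha, h.2.1.sublist hd, fun u hu v hv => h.2.2 u (hd.subset hu) v (ha.subset hv)⟩

theorem insertBefore_append_cons {s t : List ℤ} {x : ℤ} (hx : x ∉ s) (m : ℤ) :
    insertBefore (s ++ x :: t) x m = s ++ m :: x :: t := by
  have : ∀ y ∈ s, (y != x) = true := fun y hy => bne_iff_ne.mpr (ne_of_mem_of_not_mem hy hx)
  simp [insertBefore, List.takeWhile_append_of_pos this, List.dropWhile_append_of_pos this]

theorem isFamilySplit_append_singleton_iff {s r : List ℤ} {m : ℤ}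
    (hm : ∀ y ∈ s ++ r, y < m) :
    IsFamilySplit (s ++ [m]) r ↔ IsFamilySplit s r := by
  refine ⟨fun h => h.sublist (List.sublist_append_left s [m]) (List.Sublist.refl r),
    fun ⟨hs, hr, hrs⟩ => ⟨?_, hr, fun u hu v hv => ?_⟩⟩
  · exact List.pairwise_append.2 ⟨hs, List.pairwise_singleton _ m,
      fun v hv w hw => List.eq_of_mem_singleton hw ▸ hm v (List.mem_append_left r hv)⟩
  · rcases List.mem_append.1 hv with hv | hv
    · exact hrs u hu v hv
    · exact List.eq_of_mem_singleton hv ▸ hm u (List.mem_append_right s hu)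

theorem isFamilySeq_append_cons_iff_of_forall_lt {s r : List ℤ} {m : ℤ}
    (hm : ∀ y ∈ s ++ r, y < m) :
    IsFamilySeq (s ++ m :: r) ↔ r ≠ [] ∧ IsFamilySplit s r := by
  rw [isFamilySeq_iff, ← isFamilySplit_append_singleton_iff hm]
  refine ⟨fun ⟨a, d, heq, ha, hd, h⟩ => ?_,
    fun ⟨hr, h⟩ => ⟨s ++ [m], r, by simp, by simp, hr, h⟩⟩
  have hle : ∀ y ∈ s ++ m :: r, y ≤ m := by
    simp only [List.mem_append, List.mem_cons] at hm ⊢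
    grind
  have hmd : m ∉ d := fun hmd => by
    obtain ⟨v, hv⟩ := List.exists_mem_of_ne_nil a ha
    exact (h.2.2 m hmd v hv).not_ge (hle v (heq ▸ List.mem_append_left d hv))
  rcases List.append_eq_append_iff.1 heq with
    ⟨_ | ⟨y, _ | ⟨z, as⟩⟩, rfl, hd'⟩ | ⟨bs, rfl, rfl⟩
  · exact absurd (List.nil_append d ▸ hd' ▸ List.mem_cons_self) hmd
  · obtain ⟨rfl, rfl⟩ := List.cons_eq_cons.1 hd'
    exact ⟨hd, h⟩
  · obtain ⟨rfl, rfl⟩ := List.cons_eq_cons.1 hd'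
    have hmz : m < z := List.rel_of_pairwise_cons (List.pairwise_append.1 h.1).2.1 (by simp)
    exact absurd (hm z (by simp)) hmz.not_gt
  · exact absurd (by simp) hmd

theorem not_exitPos_append_cons_iff {s t : List ℤ} {x : ℤ} (hx : x ∉ s) :
    ¬ ExitPos (s ++ x :: t) x ↔ IsFamilySplit s (x :: t) := by
  obtain ⟨m₀, hm₀⟩ := (s ++ x :: t).exists_forall_lt
  have key : ∀ m, (∀ y ∈ s ++ x :: t, y < m) →
      (IsFamilySeq (insertBefore (s ++ x :: t) x m) ↔ IsFamilySplit s (x :: t)) := by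
    intro m hm
    rw [insertBefore_append_cons hx, isFamilySeq_append_cons_iff_of_forall_lt hm]
    exact and_iff_right (List.cons_ne_nil x t)
  simp only [ExitPos, List.mem_append_right s List.mem_cons_self, true_and, not_forall, not_not]
  exact ⟨fun ⟨m, hm, h⟩ => (key m hm).1 h, fun h => ⟨m₀, hm₀, (key m₀ hm₀).2 h⟩⟩

namespace IsFamilySplit

variable {a d : List ℤ}

theorem left_eq {a' d' : List ℤ} (h : IsFamilySplit a d) (h' : IsFamilySplit a' d')
    (ha : a ≠ []) (ha' : a' ≠ []) (heq : a ++ d = a' ++ d') : a = a' := by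
  rcases List.append_eq_append_iff.1 heq with ⟨b, rfl, rfl⟩ | ⟨b, rfl, rfl⟩
  · rw [List.eq_nil_of_pairwise_append_of_forall_lt ha h'.1 fun u hu => h.2.2 u (by simp [hu]),
      List.append_nil]
  · rw [List.eq_nil_of_pairwise_append_of_forall_lt ha' h.1 fun u hu => h'.2.2 u (by simp [hu]),
      List.append_nil]

theorem head?_eq_or_eq_singleton {s t : List ℤ} {x : ℤ} (h : IsFamilySplit a d) (ha : a ≠ [])
    (heq : a ++ d = s ++ x :: t) (hs : IsFamilySplit s (x :: t)) :
    d.head? = some x ∨ a = [x] := by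
  rcases s with _ | ⟨c, s⟩
  · rcases a with _ | ⟨y, _ | ⟨z, a⟩⟩
    · exact absurd rfl ha
    · exact Or.inr (by rw [(List.cons_eq_cons.1 heq).1])
    · obtain ⟨rfl, rfl⟩ := List.cons_eq_cons.1 heq
      have hyz : y < z := List.rel_of_pairwise_cons h.1 List.mem_cons_self
      exact absurd (List.rel_of_pairwise_cons hs.2.1 (by simp)) hyz.not_gt
  · obtain rfl := h.left_eq hs ha (List.cons_ne_nil c s) heq
    simp [List.append_cancel_left heq]

theorem not_exitPos_iff (h : IsFamilySplit a d) (ha : a ≠ []) {x : ℤ} (hx : x ∈ a ++ d) :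
    ¬ ExitPos (a ++ d) x ↔ d.head? = some x ∨ a = [x] := by
  refine ⟨fun hne => ?_, ?_⟩
  · obtain ⟨s, t, hst, hxs⟩ := List.eq_append_cons_of_mem hx
    rw [hst, not_exitPos_append_cons_iff hxs] at hne
    exact h.head?_eq_or_eq_singleton ha hst hne
  · rintro (hhead | rfl)
    · obtain ⟨d, rfl⟩ := List.head?_eq_some_iff.1 hhead
      rw [not_exitPos_append_cons_iff fun hxa => (h.2.2 x List.mem_cons_self x hxa).false]
      exact h
    · show ¬ ExitPos ([] ++ x :: d) x
      rw [not_exitPos_append_cons_iff List.not_mem_nil]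
      refine ⟨List.Pairwise.nil, List.pairwise_cons.2 ⟨?_, h.2.1⟩, by simp⟩
      exact fun u hu => h.2.2 u hu x (List.mem_singleton_self x)

theorem isFamilySeq_erase (h : IsFamilySplit a d) (ha : a ≠ []) (hd : d ≠ []) {x : ℤ}
    (hxd : d.head? ≠ some x) (hxa : a ≠ [x]) : IsFamilySeq ((a ++ d).erase x) := by
  rw [isFamilySeq_iff]
  by_cases hx : x ∈ a
  · rw [List.erase_append_left d hx]
    exact ⟨a.erase x, d, rfl, by simp [ha, hxa], hd, h.sublist List.erase_sublist (.refl d)⟩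
  · rw [List.erase_append_right d hx]
    refine ⟨a, d.erase x, rfl, ha, ?_, h.sublist (.refl a) List.erase_sublist⟩
    rw [Ne, List.erase_eq_nil_iff]
    rintro (rfl | rfl)
    exacts [hd rfl, hxd rfl]

end IsFamilySplit

/-- In a non-singlet family `a ++ d` (reds `a`, blues `d`), the non-exit positions are
exactly the highest blue (the head of `d`) and, when there is a unique red, that red.
Consequently a two-element family has no exit positions, while a family with at least
three elements remains a family after removal of any exit element. -/
theorem exit_positions_characterization (a d : List ℤ)
    (ha : a ≠ []) (hd : d ≠ []) (hca : a.Chain' (· < ·)) (hcd : d.Chain' (· > ·))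
    (hlt : ∀ u ∈ d, ∀ v ∈ a, u < v) :
    (∀ x ∈ a ++ d, (¬ ExitPos (a ++ d) x ↔ (d.head? = some x ∨ a = [x]))) ∧
    ((a ++ d).length = 2 → ∀ x : ℤ, ¬ ExitPos (a ++ d) x) ∧
    (3 ≤ (a ++ d).length → ∀ x : ℤ, ExitPos (a ++ d) x →
      IsFamilySeq ((a ++ d).erase x)) := by
  have h : IsFamilySplit a d :=
    ⟨List.isChain_iff_pairwise.1 hca, List.isChain_iff_pairwise.1 hcd, hlt⟩
  refine ⟨fun x hx => h.not_exitPos_iff ha hx, fun hlen x hx => ?_, fun _ x hx => ?_⟩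
  · have hlen₁ : a.length = 1 ∧ d.length = 1 := by
      have := List.length_pos_iff.2 ha
      have := List.length_pos_iff.2 hd
      rw [List.length_append] at hlen
      omega
    obtain ⟨p, rfl⟩ := List.length_eq_one_iff.1 hlen₁.1
    obtain ⟨q, rfl⟩ := List.length_eq_one_iff.1 hlen₁.2
    refine (h.not_exitPos_iff ha hx.1).2 ?_ hx
    rcases List.mem_pair.1 hx.1 with rfl | rfl <;> simp
  · obtain ⟨hxd, hxa⟩ := not_or.1 (mt (h.not_exitPos_iff ha hx.1).2 (not_not.2 hx))
    exact h.isFamilySeq_erase ha hd hxd hxa
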